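/- arXiv:2501.06195 — 5 statements merged into one kernel-verified Lean document; each statement's English description precedes it below -/
import Mathlib

section
/- For all parameters α ∈ [0,1], β ∈ (0,1], ν > α−1, the power series N_{α,β,ν}(z) = ∑_{n=0}^∞ z^n / [n]_{α,β,ν}! converges absolutely for every z ∈ ℂ (i.e., has infinite radius of convergence). -/
/-- The generalized factorial `[n]_{α,β,ν}!`. -/
noncomputable def genFact (α β ν : ℝ) (n : ℕ) : ℝ :=
  (∏ i ∈ Finset.Icc 1 n, Real.Gamma (β * i + 1) / Real.Gamma (β * i + 1 - α)) *
    (Real.Gamma (β * n + 1 - α + ν) / Real.Gamma (1 - α + ν))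

/-- The box function `[n]_{α,β,ν}`, with `[0] = 0`. -/
noncomputable def box (α β ν : ℝ) : ℕ → ℝ
  | 0 => 0
  | n + 1 =>
      (Real.Gamma (β * (n + 1) + 1) / Real.Gamma (β * (n + 1) + 1 - α)) *
        (Real.Gamma (β * (n + 1) + 1 - α + ν) / Real.Gamma (β * n + 1 - α + ν))

/-! By the ratio test it suffices that `[n+1]! / [n]! = [n+1]` tends to infinity. The first factor
of `[n+1]` is eventually at least `1` because `Γ` is increasing on `[2, ∞)`; the second is
`Γ(x + β) / Γ(x)` with `x = βn + 1 - α + ν → ∞`, which Gautschi's inequality (a consequence of the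
log-convexity of `Γ`) bounds below by `(x + β)^β / 2`. -/

open Filter

lemma summable_pow_div_of_tendsto_ratio_atTop {a : ℕ → ℝ} (ha : ∀ n, 0 < a n)
    (h : Tendsto (fun n => a (n + 1) / a n) atTop atTop) (r : ℝ) :
    Summable fun n => r ^ n / a n := by
  refine summable_of_ratio_norm_eventually_le (r := 1 / 2) (by norm_num) ?_
  filter_upwards [h.eventually_ge_atTop (2 * |r|)] with n hn
  have hq : 0 < a (n + 1) / a n := div_pos (ha _) (ha n)
  have ha0 := (ha n).ne'
  have hrq : |r| / (a (n + 1) / a n) ≤ 1 / 2 := by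
    rw [div_le_iff₀ hq]; linarith
  calc ‖r ^ (n + 1) / a (n + 1)‖ = |r| / (a (n + 1) / a n) * ‖r ^ n / a n‖ := by
        simp only [Real.norm_eq_abs, abs_div, abs_pow, abs_of_pos (ha _)]
        field_simp
        ring
    _ ≤ 1 / 2 * ‖r ^ n / a n‖ := by gcongr

namespace Real

lemma mul_Gamma_le_Gamma_add_mul_rpow {β x : ℝ} (hβ0 : 0 < β) (hβ1 : β ≤ 1) (hx : 0 < x) :
    x * Gamma x ≤ Gamma (x + β) * (x + β) ^ (1 - β) := by
  rcases hβ1.eq_or_lt with rfl | hβ1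
  · rw [sub_self, rpow_zero, mul_one, ← Gamma_add_one hx.ne']
  have hxβ : 0 < x + β := by linarith
  have hG : 0 < Gamma (x + β) := Gamma_pos_of_pos hxβ
  -- log-convexity of `Γ` at `x + 1 = β (x + β) + (1 - β) (x + β + 1)`
  have h := Gamma_mul_add_mul_le_rpow_Gamma_mul_rpow_Gamma (s := x + β) (t := x + β + 1)
    hxβ (by linarith) hβ0 (sub_pos.2 hβ1) (add_sub_cancel β 1)
  rw [show β * (x + β) + (1 - β) * (x + β + 1) = x + 1 by ring, Gamma_add_one hx.ne',
    Gamma_add_one hxβ.ne', mul_rpow hxβ.le hG.le] at h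
  calc x * Gamma x ≤ Gamma (x + β) ^ β * ((x + β) ^ (1 - β) * Gamma (x + β) ^ (1 - β)) := h
    _ = Gamma (x + β) * (x + β) ^ (1 - β) := by
      rw [mul_left_comm, ← rpow_add hG, add_sub_cancel, rpow_one, mul_comm]

lemma rpow_div_two_le_Gamma_add_div_Gamma {β x : ℝ} (hβ0 : 0 < β) (hβ1 : β ≤ 1) (hβx : β ≤ x) :
    (x + β) ^ β / 2 ≤ Gamma (x + β) / Gamma x := by
  have hx : 0 < x := hβ0.trans_le hβx
  have hxβ : 0 < x + β := by linarith
  have hGx : 0 < Gamma x := Gamma_pos_of_pos hx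
  have hP : 0 < (x + β) ^ β := rpow_pos_of_pos hxβ β
  have key := mul_Gamma_le_Gamma_add_mul_rpow hβ0 hβ1 hx
  rw [rpow_sub hxβ, rpow_one, mul_div_assoc', le_div_iff₀ hP] at key
  rw [div_le_div_iff₀ two_pos hGx]
  refine le_of_mul_le_mul_right ?_ hxβ
  calc (x + β) ^ β * Gamma x * (x + β) ≤ (x + β) ^ β * Gamma x * (2 * x) := by gcongr; linarith
    _ = 2 * (x * Gamma x * (x + β) ^ β) := by ring
    _ ≤ Gamma (x + β) * 2 * (x + β) := by linarith

lemma tendsto_Gamma_add_div_Gamma_atTop {β : ℝ} (hβ0 : 0 < β) (hβ1 : β ≤ 1) :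
    Tendsto (fun x => Gamma (x + β) / Gamma x) atTop atTop := by
  have h : Tendsto (fun x : ℝ => (x + β) ^ β / 2) atTop atTop :=
    ((tendsto_rpow_atTop hβ0).comp (tendsto_atTop_add_const_right _ β tendsto_id)).atTop_div_const
      two_pos
  refine tendsto_atTop_mono' _ ?_ h
  filter_upwards [eventually_ge_atTop β] with x hx
  exact rpow_div_two_le_Gamma_add_div_Gamma hβ0 hβ1 hx

lemma one_le_Gamma_div_Gamma_sub {α w : ℝ} (hα : 0 ≤ α) (hw : 2 ≤ w - α) :
    1 ≤ Gamma w / Gamma (w - α) := by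
  rw [one_le_div (Gamma_pos_of_pos (by linarith))]
  exact Gamma_strictMonoOn_Ici.monotoneOn hw (by simp only [Set.mem_Ici]; linarith) (by linarith)

end Real

section GenFact

variable {α β ν : ℝ}

lemma genFact_pos (hα : α ≤ 1) (hβ : 0 < β) (hν : α - 1 < ν) (n : ℕ) : 0 < genFact α β ν n := by
  have hβn (m : ℕ) : 0 ≤ β * m := by positivity
  refine mul_pos (Finset.prod_pos fun i hi => ?_) ?_
  · have hi : 0 < β * i := mul_pos hβ (Nat.cast_pos.2 (Finset.mem_Icc.1 hi).1)
    exact div_pos (Real.Gamma_pos_of_pos (by linarith)) (Real.Gamma_pos_of_pos (by linarith))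
  · exact div_pos (Real.Gamma_pos_of_pos (by linarith [hβn n]))
      (Real.Gamma_pos_of_pos (by linarith))

lemma genFact_succ {n : ℕ} (h : Real.Gamma (β * n + 1 - α + ν) ≠ 0) :
    genFact α β ν (n + 1) = genFact α β ν n * box α β ν (n + 1) := by
  simp only [genFact, box, Finset.prod_Icc_succ_top (Nat.le_add_left 1 n), Nat.cast_add,
    Nat.cast_one]
  field_simp

lemma tendsto_box_atTop (hα : 0 ≤ α) (hβ0 : 0 < β) (hβ1 : β ≤ 1) :
    Tendsto (fun n : ℕ => box α β ν (n + 1)) atTop atTop := by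
  have hβn : Tendsto (fun n : ℕ => β * n) atTop atTop :=
    tendsto_natCast_atTop_atTop.const_mul_atTop hβ0
  have hx : Tendsto (fun n : ℕ => β * n + 1 - α + ν) atTop atTop :=
    (tendsto_atTop_add_const_right _ (1 - α + ν) hβn).congr fun n => by ring
  refine tendsto_atTop_mono' _ ?_ ((Real.tendsto_Gamma_add_div_Gamma_atTop hβ0 hβ1).comp hx)
  filter_upwards [hx.eventually_gt_atTop 0, hβn.eventually_ge_atTop (1 + α)] with n hxn hn
  have hA := Real.one_le_Gamma_div_Gamma_sub (w := β * (n + 1) + 1) hα (by linarith)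
  have hB : 0 ≤ Real.Gamma (β * n + 1 - α + ν + β) / Real.Gamma (β * n + 1 - α + ν) :=
    div_nonneg (Real.Gamma_pos_of_pos (by linarith)).le (Real.Gamma_pos_of_pos hxn).le
  simp only [box, Function.comp_apply]
  rw [show β * (n + 1) + 1 - α + ν = β * n + 1 - α + ν + β by ring]
  exact le_mul_of_one_le_left hB hA

end GenFact

theorem normalization_series_converges_everywhere (α β ν : ℝ) (hα0 : 0 ≤ α) (hα1 : α ≤ 1)
    (hβ0 : 0 < β) (hβ1 : β ≤ 1) (hν : ν > α - 1) (z : ℂ) :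
    Summable (fun n : ℕ => ‖z ^ n / (genFact α β ν n : ℂ)‖) := by
  have hpos := genFact_pos hα1 hβ0 hν
  have hratio : Tendsto (fun n => genFact α β ν (n + 1) / genFact α β ν n) atTop atTop :=
    (tendsto_box_atTop (ν := ν) hα0 hβ0 hβ1).congr fun n => by
      rw [genFact_succ (Real.Gamma_pos_of_pos (by linarith [(by positivity : 0 ≤ β * n)])).ne',
        mul_div_cancel_left₀ _ (hpos n).ne']
  simpa only [norm_div, norm_pow, Complex.norm_real, Real.norm_eq_abs, abs_of_pos (hpos _)] using
    summable_pow_div_of_tendsto_ratio_atTop hpos hratio ‖z‖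
end

section
/- For parameters α ∈ [0,1], β ∈ (0,1], ν > α−1 and constants ℏ, ω > 0, the deformed Hamiltonian H = (ℏω/2)(A† A + A A†) has each standard basis sequence e_n as eigenvector with eigenvalue E_n = (ℏω/2)([n+1]_{α,β,ν} + [n]_{α,β,ν}). -/
/-- The deformed annihilation operator on complex sequences. -/
noncomputable def annOp (α β ν : ℝ) (f : ℕ → ℂ) : ℕ → ℂ :=
  fun n => (Real.sqrt (box α β ν (n + 1)) : ℂ) * f (n + 1)

/-- The deformed creation operator on complex sequences. -/
noncomputable def creOp (α β ν : ℝ) (f : ℕ → ℂ) : ℕ → ℂ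
  | 0 => 0
  | n + 1 => (Real.sqrt (box α β ν (n + 1)) : ℂ) * f n

/-- The standard basis sequence `e n`. -/
def basisSeq (n : ℕ) : ℕ → ℂ := fun m => if m = n then 1 else 0

lemma box_nonneg (α β ν : ℝ) (hα1 : α ≤ 1) (hβ0 : 0 < β) (hν : ν > α - 1) (m : ℕ) :
    0 ≤ box α β ν m := by
  cases m with
  | zero => simp [box]
  | succ k =>
    have h1 : (0:ℝ) < β * (k + 1) + 1 := by positivity
    have h2 : (0:ℝ) < β * (k + 1) + 1 - α := by nlinarith [Nat.cast_nonneg (α := ℝ) k]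
    have h3 : (0:ℝ) < β * (k + 1) + 1 - α + ν := by nlinarith [Nat.cast_nonneg (α := ℝ) k]
    have h4 : (0:ℝ) < β * k + 1 - α + ν := by nlinarith [Nat.cast_nonneg (α := ℝ) k]
    have := Real.Gamma_pos_of_pos h1
    have := Real.Gamma_pos_of_pos h2
    have := Real.Gamma_pos_of_pos h3
    have := Real.Gamma_pos_of_pos h4
    simp only [box]
    positivity

lemma sq_sqrt_box (α β ν : ℝ) (hα1 : α ≤ 1) (hβ0 : 0 < β) (hν : ν > α - 1) (m : ℕ) :
    ((Real.sqrt (box α β ν m) : ℂ)) * ((Real.sqrt (box α β ν m) : ℂ)) = (box α β ν m : ℂ) := by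
  rw [← Complex.ofReal_mul, Real.mul_self_sqrt (box_nonneg α β ν hα1 hβ0 hν m)]

theorem hamiltonian_eigenvalues (α β ν ℏ ω : ℝ) (hα0 : 0 ≤ α) (hα1 : α ≤ 1)
    (hβ0 : 0 < β) (hβ1 : β ≤ 1) (hν : ν > α - 1) (hℏ : 0 < ℏ) (hω : 0 < ω) (n : ℕ) :
    (fun m => ((ℏ * ω / 2 : ℝ) : ℂ) *
        (creOp α β ν (annOp α β ν (basisSeq n)) m + annOp α β ν (creOp α β ν (basisSeq n)) m)) =
      fun m =>
        ((ℏ * ω / 2 * (box α β ν (n + 1) + box α β ν n) : ℝ) : ℂ) * basisSeq n m := by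
  funext m
  have hsq' : ∀ (j : ℕ) (c : ℂ), (Real.sqrt (box α β ν j) : ℂ) *
      ((Real.sqrt (box α β ν j) : ℂ) * c) = ((box α β ν j : ℝ) : ℂ) * c := by
    intro j c; rw [← mul_assoc, sq_sqrt_box α β ν hα1 hβ0 hν]
  have key : creOp α β ν (annOp α β ν (basisSeq n)) m
      + annOp α β ν (creOp α β ν (basisSeq n)) m
      = ((box α β ν (n + 1) + box α β ν n : ℝ) : ℂ) * basisSeq n m := by
    cases m with
    | zero =>
      simp only [creOp, annOp, basisSeq, zero_add, hsq']
      split_ifs with h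
      · subst h; simp [box]
      · simp
    | succ k =>
      simp only [creOp, annOp, basisSeq, hsq']
      split_ifs with h
      · subst h; push_cast; ring
      · simp
  rw [key]
  push_cast
  ring
end

section
/- For parameters α ∈ [0,1], β ∈ (0,1], ν > α−1 and constants ℏ, ω, m > 0, define the quadrature operators q = √(ℏ/(2mω))(A + A†) and p = i√(ℏmω/2)(A† − A). In the vacuum state e_0 the expectations ⟨e_0, q e_0⟩ and ⟨e_0, p e_0⟩ vanish, the variances are (Δq)₀² = (ℏ/(2mω))[1]_{α,β,ν} and (Δp)₀² = (ℏmω/2)[1]_{α,β,ν}, and the uncertainty product equals (Δq)₀(Δp)₀ = (ℏ/2) · (Γ(β+1)/Γ(β+1−α)) · (Γ(β+1−α+ν)/Γ(1−α+ν)). -/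
/-- The ℓ² inner product on sequences (conjugate-linear in the first slot). -/
noncomputable def seqInner (f g : ℕ → ℂ) : ℂ := ∑' n : ℕ, (starRingEnd ℂ) (f n) * g n

/-- The position quadrature operator. -/
noncomputable def quadQ (α β ν ℏ ω m : ℝ) (f : ℕ → ℂ) : ℕ → ℂ :=
  fun n => (Real.sqrt (ℏ / (2 * m * ω)) : ℂ) * (annOp α β ν f n + creOp α β ν f n)

/-- The momentum quadrature operator. -/
noncomputable def quadP (α β ν ℏ ω m : ℝ) (f : ℕ → ℂ) : ℕ → ℂ :=
  fun n => Complex.I * (Real.sqrt (ℏ * m * ω / 2) : ℂ) * (creOp α β ν f n - annOp α β ν f n)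


/-! The vacuum is annihilated by `A`, and `A† e₀ = √[1] e₁`; so `q e₀` and `p e₀` are multiples of
`e₁`, orthogonal to `e₀`, while `q` and `p` carry `e₁` back to `e₀` with one more factor `√[1]`.
Both variances are therefore `[1]` times the squared scale, their product is `(ℏ/2)² [1]²`, and
`[1] > 0` is a quotient of Gamma values at positive arguments. -/

open Complex

lemma seqInner_basisSeq_left (n : ℕ) (g : ℕ → ℂ) : seqInner (basisSeq n) g = g n := by
  rw [seqInner, tsum_eq_single n fun k hk => by simp [basisSeq, hk]]
  simp [basisSeq]

lemma box_one (α β ν : ℝ) :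
    box α β ν 1 = Real.Gamma (β + 1) / Real.Gamma (β + 1 - α) *
      (Real.Gamma (β + 1 - α + ν) / Real.Gamma (1 - α + ν)) := by
  norm_num [box]

lemma box_succ_pos {α β ν : ℝ} (hβ : 0 < β) (hα : α ≤ 1) (hν : ν > α - 1) (n : ℕ) :
    0 < box α β ν (n + 1) := by
  have hβn : 0 ≤ β * n := by positivity
  have h₁ : 0 < Real.Gamma (β * (n + 1) + 1) := Real.Gamma_pos_of_pos (by nlinarith)
  have h₂ : 0 < Real.Gamma (β * (n + 1) + 1 - α) := Real.Gamma_pos_of_pos (by nlinarith)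
  have h₃ : 0 < Real.Gamma (β * (n + 1) + 1 - α + ν) := Real.Gamma_pos_of_pos (by nlinarith)
  have h₄ : 0 < Real.Gamma (β * n + 1 - α + ν) := Real.Gamma_pos_of_pos (by linarith)
  simp only [box]
  positivity

section Quadratures

variable (α β ν ℏ ω m : ℝ)

lemma quadQ_basisSeq_zero :
    quadQ α β ν ℏ ω m (basisSeq 0) =
      fun n => (√(ℏ / (2 * m * ω)) * √(box α β ν 1) : ℂ) * basisSeq 1 n := by
  funext n
  rcases n with _ | _ | n <;> simp [quadQ, annOp, creOp, basisSeq]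

lemma quadP_basisSeq_zero :
    quadP α β ν ℏ ω m (basisSeq 0) =
      fun n => (I * √(ℏ * m * ω / 2) * √(box α β ν 1) : ℂ) * basisSeq 1 n := by
  funext n
  rcases n with _ | _ | n <;> simp [quadP, annOp, creOp, basisSeq, mul_assoc]

lemma quadQ_apply_zero (f : ℕ → ℂ) :
    quadQ α β ν ℏ ω m f 0 = (√(ℏ / (2 * m * ω)) * √(box α β ν 1) : ℂ) * f 1 := by
  simp [quadQ, annOp, creOp, mul_assoc]

lemma quadP_apply_zero (f : ℕ → ℂ) :
    quadP α β ν ℏ ω m f 0 = -(I * √(ℏ * m * ω / 2) * √(box α β ν 1) : ℂ) * f 1 := by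
  simp [quadP, annOp, creOp, mul_assoc]

end Quadratures

lemma ofReal_sqrt_mul_sqrt_sq {a b : ℝ} (ha : 0 ≤ a) (hb : 0 ≤ b) :
    ((√a * √b : ℂ)) ^ 2 = ((a * b : ℝ) : ℂ) := by
  rw [mul_pow, ← ofReal_pow, ← ofReal_pow, Real.sq_sqrt ha, Real.sq_sqrt hb, ofReal_mul]

lemma sqrt_mul_sqrt_eq_of_mul_eq_sq {a c b s : ℝ} (ha : 0 ≤ a) (hb : 0 ≤ b) (hs : 0 ≤ s)
    (hac : a * c = s ^ 2) : √(a * b) * √(c * b) = s * b := by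
  rw [← Real.sqrt_mul (by positivity), show a * b * (c * b) = (s * b) ^ 2 by
    rw [mul_pow, ← hac]; ring, Real.sqrt_sq (by positivity)]

theorem vacuum_quadrature_fluctuations_general (α β ν ℏ ω m : ℝ) (hα1 : α ≤ 1)
    (hβ0 : 0 < β) (hν : ν > α - 1) (hℏ : 0 < ℏ) (hω : 0 < ω) (hm : 0 < m) :
    seqInner (basisSeq 0) (quadQ α β ν ℏ ω m (basisSeq 0)) = 0 ∧
    seqInner (basisSeq 0) (quadP α β ν ℏ ω m (basisSeq 0)) = 0 ∧
    seqInner (basisSeq 0) (quadQ α β ν ℏ ω m (quadQ α β ν ℏ ω m (basisSeq 0))) -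
        (seqInner (basisSeq 0) (quadQ α β ν ℏ ω m (basisSeq 0))) ^ 2 =
      ((ℏ / (2 * m * ω) * box α β ν 1 : ℝ) : ℂ) ∧
    seqInner (basisSeq 0) (quadP α β ν ℏ ω m (quadP α β ν ℏ ω m (basisSeq 0))) -
        (seqInner (basisSeq 0) (quadP α β ν ℏ ω m (basisSeq 0))) ^ 2 =
      ((ℏ * m * ω / 2 * box α β ν 1 : ℝ) : ℂ) ∧
    Real.sqrt (ℏ / (2 * m * ω) * box α β ν 1) * Real.sqrt (ℏ * m * ω / 2 * box α β ν 1) =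
      ℏ / 2 * (Real.Gamma (β + 1) / Real.Gamma (β + 1 - α)) *
        (Real.Gamma (β + 1 - α + ν) / Real.Gamma (1 - α + ν)) := by
  have hb : 0 ≤ box α β ν 1 := (box_succ_pos hβ0 hα1 hν 0).le
  have hq : 0 ≤ ℏ / (2 * m * ω) := by positivity
  have hp : 0 ≤ ℏ * m * ω / 2 := by positivity
  simp only [seqInner_basisSeq_left, quadQ_apply_zero, quadP_apply_zero, quadQ_basisSeq_zero,
    quadP_basisSeq_zero, basisSeq]
  refine ⟨by simp, by simp, ?_, ?_, ?_⟩
  · simpa [← sq] using ofReal_sqrt_mul_sqrt_sq hq hb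
  · rw [← ofReal_sqrt_mul_sqrt_sq hp hb]
    simp only [if_true, zero_ne_one, if_false, mul_one, mul_zero]
    linear_combination (-((√(ℏ * m * ω / 2) : ℂ) * √(box α β ν 1)) ^ 2) * I_sq
  · rw [sqrt_mul_sqrt_eq_of_mul_eq_sq (s := ℏ / 2) hq hb (by positivity) (by field_simp), box_one]
    ring

theorem vacuum_quadrature_fluctuations (α β ν ℏ ω m : ℝ) (hα0 : 0 ≤ α) (hα1 : α ≤ 1)
    (hβ0 : 0 < β) (hβ1 : β ≤ 1) (hν : ν > α - 1) (hℏ : 0 < ℏ) (hω : 0 < ω) (hm : 0 < m) :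
    seqInner (basisSeq 0) (quadQ α β ν ℏ ω m (basisSeq 0)) = 0 ∧
    seqInner (basisSeq 0) (quadP α β ν ℏ ω m (basisSeq 0)) = 0 ∧
    seqInner (basisSeq 0) (quadQ α β ν ℏ ω m (quadQ α β ν ℏ ω m (basisSeq 0))) -
        (seqInner (basisSeq 0) (quadQ α β ν ℏ ω m (basisSeq 0))) ^ 2 =
      ((ℏ / (2 * m * ω) * box α β ν 1 : ℝ) : ℂ) ∧
    seqInner (basisSeq 0) (quadP α β ν ℏ ω m (quadP α β ν ℏ ω m (basisSeq 0))) -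
        (seqInner (basisSeq 0) (quadP α β ν ℏ ω m (basisSeq 0))) ^ 2 =
      ((ℏ * m * ω / 2 * box α β ν 1 : ℝ) : ℂ) ∧
    Real.sqrt (ℏ / (2 * m * ω) * box α β ν 1) * Real.sqrt (ℏ * m * ω / 2 * box α β ν 1) =
      ℏ / 2 * (Real.Gamma (β + 1) / Real.Gamma (β + 1 - α)) *
        (Real.Gamma (β + 1 - α + ν) / Real.Gamma (1 - α + ν)) :=
  vacuum_quadrature_fluctuations_general α β ν ℏ ω m hα1 hβ0 hν hℏ hω hm
end

section
/- Let β ∈ (0,1) and −β < ν < 0, and define the weight function Ũ_{1−β,β,ν}(x) = (Γ(β)/(β²Γ(β+ν)Γ(−ν))) ∫_1^∞ (t^{1/β}−1)^{−ν−1} t^{1/β−1} e^{−xt/β} dt for x > 0. Then Ũ_{1−β,β,ν} is nonnegative and solves the Stieltjes moment problem for the case α = 1−β: for every n ∈ ℕ, ∫_0^∞ x^n Ũ_{1−β,β,ν}(x) dx = β^n · Γ(β) · n! · Γ(βn+β+ν) / (Γ(β+ν) · Γ(βn+β)) = [n]_{1−β,β,ν}!. -/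
/-!
Write `Ũ(x) = C ∫_1^∞ g(t) e^{-xt/β} dt` with `g(t) = (t^{1/β} - 1)^{-ν-1} t^{1/β-1} ≥ 0`.
Since everything is nonnegative, Fubini lets us integrate in `x` first, and
`∫_0^∞ x^n e^{-xt/β} dx = n! (β/t)^{n+1}`. The substitution `t = s^{-β}` maps `(0,1)` onto
`(1,∞)` and turns `∫_1^∞ g(t) t^{-(n+1)} dt` into the Beta integral `β B(βn+β+ν, -ν)`. The
resulting Gamma quotient is `[n]_{1-β,β,ν}!` because `Γ(βi+1) / Γ(βi+β)` telescopes.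
-/

open MeasureTheory Set

/-- The weight function `Ũ_{1−β,β,ν}` for the case `α = 1 − β`. -/
noncomputable def subWeight (β ν : ℝ) (x : ℝ) : ℝ :=
  (Real.Gamma β / (β ^ 2 * Real.Gamma (β + ν) * Real.Gamma (-ν))) *
    ∫ t in Set.Ioi (1 : ℝ),
      (t ^ (1 / β) - 1) ^ (-ν - 1) * t ^ (1 / β - 1) * Real.exp (-(x * t) / β)

theorem integral_Ioo_rpow_mul_one_sub_rpow {a b : ℝ} (ha : 0 < a) (hb : 0 < b) :
    ∫ x in Ioo (0 : ℝ) 1, x ^ (a - 1) * (1 - x) ^ (b - 1) =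
      Real.Gamma a * Real.Gamma b / Real.Gamma (a + b) := by
  have hnormalized := ProbabilityTheory.lintegral_betaPDF_eq_one ha hb
  rw [ProbabilityTheory.lintegral_betaPDF, ← ENNReal.toReal_eq_one_iff,
    ← integral_eq_lintegral_of_nonneg_ae] at hnormalized
  · simp_rw [mul_assoc, integral_const_mul, one_div] at hnormalized
    exact ((inv_mul_eq_one₀ (ProbabilityTheory.beta_pos ha hb).ne').1 hnormalized).symm
  · refine ae_restrict_of_forall_mem measurableSet_Ioo fun x ⟨hx0, hx1⟩ => ?_
    exact mul_nonneg (mul_nonneg (one_div_pos.2 (ProbabilityTheory.beta_pos ha hb)).le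
      (Real.rpow_nonneg hx0.le _)) (Real.rpow_nonneg (sub_nonneg.2 hx1.le) _)
  · exact (by fun_prop : Measurable _).aestronglyMeasurable

theorem image_rpow_neg_Ioo_zero_one {p : ℝ} (hp : 0 < p) :
    (fun s : ℝ => s ^ (-p)) '' Ioo 0 1 = Ioi 1 := by
  ext t
  constructor
  · rintro ⟨s, ⟨hs0, hs1⟩, rfl⟩
    exact Real.one_lt_rpow_of_pos_of_lt_one_of_neg hs0 hs1 (neg_neg_of_pos hp)
  · intro (ht : 1 < t)
    have ht0 : 0 < t := one_pos.trans ht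
    refine ⟨t ^ (-p⁻¹), ⟨by positivity,
      Real.rpow_lt_one_of_one_lt_of_neg ht (by simpa using hp)⟩, ?_⟩
    show (t ^ (-p⁻¹)) ^ (-p) = t
    rw [← Real.rpow_mul ht0.le, neg_mul_neg, inv_mul_cancel₀ hp.ne', Real.rpow_one]

theorem integral_Ioi_one_eq_integral_Ioo_comp_rpow_neg {E : Type*} [NormedAddCommGroup E]
    [NormedSpace ℝ E] {p : ℝ} (hp : 0 < p) (f : ℝ → E) :
    ∫ t in Ioi 1, f t = ∫ s in Ioo 0 1, (p * s ^ (-p - 1)) • f (s ^ (-p)) := by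
  have hderiv : ∀ s ∈ Ioo (0 : ℝ) 1,
      HasDerivWithinAt (fun s : ℝ => s ^ (-p)) (-p * s ^ (-p - 1)) (Ioo 0 1) s :=
    fun s hs => (Real.hasDerivAt_rpow_const (Or.inl hs.1.ne')).hasDerivWithinAt
  have hinj : InjOn (fun s : ℝ => s ^ (-p)) (Ioo 0 1) :=
    (Real.rpow_left_injOn (neg_ne_zero.2 hp.ne')).mono fun s hs => hs.1.le
  rw [← image_rpow_neg_Ioo_zero_one hp,
    integral_image_eq_integral_abs_deriv_smul measurableSet_Ioo hderiv hinj]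
  refine setIntegral_congr_fun measurableSet_Ioo fun s hs => ?_
  rw [neg_mul, abs_neg, abs_of_pos (mul_pos hp (Real.rpow_pos_of_pos hs.1 _))]

theorem integral_pow_mul_exp_neg_mul_div {β t : ℝ} (hβ : 0 < β) (ht : 0 < t) (n : ℕ) :
    ∫ x in Ioi 0, x ^ n * Real.exp (-(x * t) / β) =
      n.factorial * β ^ (n + 1) * t ^ (-((n : ℝ) + 1)) := by
  have hGamma := Real.integral_rpow_mul_exp_neg_mul_Ioi (Nat.cast_add_one_pos n) (div_pos ht hβ)
  have hβpow : β ^ ((n : ℝ) + 1) = β ^ (n + 1) := by exact_mod_cast Real.rpow_natCast β (n + 1)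
  rw [add_sub_cancel_right, Real.Gamma_nat_eq_factorial, one_div_div, Real.div_rpow hβ.le ht.le,
    hβpow] at hGamma
  convert hGamma using 1
  · refine setIntegral_congr_fun measurableSet_Ioi fun x _ => ?_
    rw [Real.rpow_natCast]
    ring_nf
  · rw [Real.rpow_neg ht.le]
    ring

theorem integral_pow_mul_integral_mul_exp {β : ℝ} (hβ : 0 < β) {S : Set ℝ}
    (hS : MeasurableSet S) (hS0 : S ⊆ Ioi 0) {g : ℝ → ℝ} (hg : Measurable g)
    (hg0 : ∀ t ∈ S, 0 ≤ g t) (n : ℕ)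
    (hgi : IntegrableOn (fun t => g t * t ^ (-((n : ℝ) + 1))) S) :
    ∫ x in Ioi 0, x ^ n * ∫ t in S, g t * Real.exp (-(x * t) / β) =
      n.factorial * β ^ (n + 1) * ∫ t in S, g t * t ^ (-((n : ℝ) + 1)) := by
  set F : ℝ → ℝ → ℝ := fun t x => g t * (x ^ n * Real.exp (-(x * t) / β))
  have hF0 : ∀ t ∈ S, ∀ x ∈ Ioi (0 : ℝ), 0 ≤ F t x := fun t ht x hx =>
    mul_nonneg (hg0 t ht) (mul_nonneg (pow_nonneg (le_of_lt hx) n) (Real.exp_nonneg _))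
  have hinner : ∀ t ∈ S, ∫ x in Ioi 0, F t x =
      n.factorial * β ^ (n + 1) * (g t * t ^ (-((n : ℝ) + 1))) := fun t ht => by
    rw [integral_const_mul, integral_pow_mul_exp_neg_mul_div hβ (hS0 ht)]
    ring
  have hint : Integrable (Function.uncurry F)
      ((volume.restrict S).prod (volume.restrict (Ioi 0))) := by
    have hmeas : Measurable (Function.uncurry F) := by fun_prop
    refine (integrable_prod_iff hmeas.aestronglyMeasurable).2 ⟨?_, ?_⟩
    · filter_upwards [ae_restrict_mem hS] with t ht
      have ht0 : 0 < t := hS0 ht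
      -- a nonzero Bochner integral certifies integrability
      refine (Integrable.of_integral_ne_zero ?_).const_mul (g t)
      rw [integral_pow_mul_exp_neg_mul_div hβ ht0]
      positivity
    · refine IntegrableOn.congr_fun (hgi.const_mul (n.factorial * β ^ (n + 1)))
        (fun t ht => ?_) hS
      rw [← hinner t ht]
      exact setIntegral_congr_fun measurableSet_Ioi fun x hx =>
        (Real.norm_of_nonneg (hF0 t ht x hx)).symm
  calc ∫ x in Ioi 0, x ^ n * ∫ t in S, g t * Real.exp (-(x * t) / β)
      = ∫ x in Ioi 0, ∫ t in S, F t x := by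
        refine setIntegral_congr_fun measurableSet_Ioi fun x _ => ?_
        simp only [F, ← integral_const_mul]
        congr 1 with t
        ring
    _ = ∫ t in S, ∫ x in Ioi 0, F t x := (integral_integral_swap hint).symm
    _ = ∫ t in S, n.factorial * β ^ (n + 1) * (g t * t ^ (-((n : ℝ) + 1))) :=
        setIntegral_congr_fun hS hinner
    _ = _ := integral_const_mul _ _

noncomputable def subDensity (β ν t : ℝ) : ℝ :=
  (t ^ (1 / β) - 1) ^ (-ν - 1) * t ^ (1 / β - 1)

theorem subWeight_eq_mul_integral_subDensity (β ν x : ℝ) :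
    subWeight β ν x = Real.Gamma β / (β ^ 2 * Real.Gamma (β + ν) * Real.Gamma (-ν)) *
      ∫ t in Ioi 1, subDensity β ν t * Real.exp (-(x * t) / β) :=
  rfl

theorem measurable_subDensity (β ν : ℝ) : Measurable (subDensity β ν) := by
  unfold subDensity
  fun_prop

theorem subDensity_nonneg {β ν t : ℝ} (hβ : 0 ≤ β) (ht : 1 ≤ t) : 0 ≤ subDensity β ν t :=
  mul_nonneg (Real.rpow_nonneg (sub_nonneg.2 (Real.one_le_rpow ht (by positivity))) _)
    (Real.rpow_nonneg (zero_le_one.trans ht) _)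

theorem rpow_neg_smul_subDensity_mul_rpow {β ν r s : ℝ} (hβ : 0 < β) (hs : s ∈ Ioo (0 : ℝ) 1) :
    (β * s ^ (-β - 1)) • (subDensity β ν (s ^ (-β)) * (s ^ (-β)) ^ (-r)) =
      β * (s ^ (β * r + ν - 1) * (1 - s) ^ (-ν - 1)) := by
  obtain ⟨hs0, hs1⟩ := hs
  have hinv : (s ^ (-β)) ^ (1 / β) - 1 = (1 - s) * s ^ (-1 : ℝ) := by
    rw [← Real.rpow_mul hs0.le, neg_mul, mul_one_div_cancel hβ.ne', Real.rpow_neg_one]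
    field_simp
  rw [subDensity, hinv, Real.mul_rpow (by linarith) (by positivity), ← Real.rpow_mul hs0.le,
    ← Real.rpow_mul hs0.le, ← Real.rpow_mul hs0.le, smul_eq_mul]
  have hexp : s ^ (-β - 1) * s ^ (-1 * (-ν - 1)) * s ^ (-β * (1 / β - 1)) * s ^ (-β * -r) =
      s ^ (β * r + ν - 1) := by
    rw [← Real.rpow_add hs0, ← Real.rpow_add hs0, ← Real.rpow_add hs0]
    congr 1
    field_simp
    ring
  rw [← hexp]
  ring

theorem integral_subDensity_mul_rpow {β ν r : ℝ} (hβ : 0 < β) (hν : ν < 0)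
    (hr : 0 < β * r + ν) :
    ∫ t in Ioi 1, subDensity β ν t * t ^ (-r) =
      β * (Real.Gamma (β * r + ν) * Real.Gamma (-ν) / Real.Gamma (β * r)) := by
  rw [integral_Ioi_one_eq_integral_Ioo_comp_rpow_neg hβ,
    setIntegral_congr_fun measurableSet_Ioo fun s hs => rpow_neg_smul_subDensity_mul_rpow hβ hs,
    integral_const_mul, integral_Ioo_rpow_mul_one_sub_rpow hr (neg_pos.2 hν),
    add_neg_cancel_right]

theorem prod_Gamma_mul_add_one_div_Gamma_mul_add {β : ℝ} (hβ : 0 < β) (n : ℕ) :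
    ∏ i ∈ Finset.Icc 1 n, Real.Gamma (β * i + 1) / Real.Gamma (β * i + β) =
      β ^ n * n.factorial * Real.Gamma β / Real.Gamma (β * n + β) := by
  induction n with
  | zero => simp [(Real.Gamma_pos_of_pos hβ).ne']
  | succ n ih =>
    have hpos : 0 < β * n + β := by positivity
    have hshift : β * ↑(n + 1) = β * n + β := by push_cast; ring
    rw [Finset.prod_Icc_succ_top (by omega), ih, hshift, Real.Gamma_add_one hpos.ne',
      Nat.factorial_succ]
    field_simp [(Real.Gamma_pos_of_pos hpos).ne']
    push_cast
    ring

theorem genFact_one_sub {β : ℝ} (hβ : 0 < β) (ν : ℝ) (n : ℕ) :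
    genFact (1 - β) β ν n = β ^ n * Real.Gamma β * n.factorial * Real.Gamma (β * n + β + ν) /
      (Real.Gamma (β + ν) * Real.Gamma (β * n + β)) := by
  have hshift : ∀ x : ℝ, x + 1 - (1 - β) = x + β := fun x => by ring
  simp only [genFact, hshift, sub_sub_cancel, prod_Gamma_mul_add_one_div_Gamma_mul_add hβ]
  ring

theorem subWeight_solves_stieltjes_general (β ν : ℝ) (hβ0 : 0 < β)
    (hν1 : -β < ν) (hν2 : ν < 0) :
    (∀ x : ℝ, 0 < x → 0 ≤ subWeight β ν x) ∧
    ∀ n : ℕ,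
      (∫ x in Set.Ioi (0 : ℝ), x ^ n * subWeight β ν x) =
          β ^ n * Real.Gamma β * n.factorial * Real.Gamma (β * n + β + ν) /
            (Real.Gamma (β + ν) * Real.Gamma (β * n + β)) ∧
        β ^ n * Real.Gamma β * n.factorial * Real.Gamma (β * n + β + ν) /
            (Real.Gamma (β + ν) * Real.Gamma (β * n + β)) = genFact (1 - β) β ν n := by
  have hβν : 0 < β + ν := by linarith
  have hΓβ := Real.Gamma_pos_of_pos hβ0
  have hΓβν := Real.Gamma_pos_of_pos hβν
  have hΓν := Real.Gamma_pos_of_pos (neg_pos.2 hν2)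
  refine ⟨fun x _ => ?_, fun n => ⟨?_, (genFact_one_sub hβ0 ν n).symm⟩⟩
  · rw [subWeight_eq_mul_integral_subDensity]
    exact mul_nonneg (by positivity) (setIntegral_nonneg measurableSet_Ioi fun t ht =>
      mul_nonneg (subDensity_nonneg hβ0.le (le_of_lt ht)) (Real.exp_nonneg _))
  have hr : 0 < β * ((n : ℝ) + 1) + ν := by nlinarith [n.cast_nonneg (α := ℝ)]
  have hΓr := Real.Gamma_pos_of_pos hr
  have hΓn := Real.Gamma_pos_of_pos (show 0 < β * ((n : ℝ) + 1) by positivity)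
  have hmoment := integral_subDensity_mul_rpow hβ0 hν2 hr
  have hint : IntegrableOn (fun t => subDensity β ν t * t ^ (-((n : ℝ) + 1))) (Ioi 1) :=
    Integrable.of_integral_ne_zero (by rw [hmoment]; positivity)
  simp_rw [subWeight_eq_mul_integral_subDensity, mul_left_comm _ (Real.Gamma β / _),
    integral_const_mul]
  rw [integral_pow_mul_integral_mul_exp hβ0 measurableSet_Ioi (Ioi_subset_Ioi zero_le_one)
    (measurable_subDensity β ν) (fun t ht => subDensity_nonneg hβ0.le (le_of_lt ht)) n hint,
    hmoment, mul_add_one]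
  field_simp
  ring

theorem subWeight_solves_stieltjes (β ν : ℝ) (hβ0 : 0 < β) (hβ1 : β < 1)
    (hν1 : -β < ν) (hν2 : ν < 0) :
    (∀ x : ℝ, 0 < x → 0 ≤ subWeight β ν x) ∧
    ∀ n : ℕ,
      (∫ x in Set.Ioi (0 : ℝ), x ^ n * subWeight β ν x) =
          β ^ n * Real.Gamma β * n.factorial * Real.Gamma (β * n + β + ν) /
            (Real.Gamma (β + ν) * Real.Gamma (β * n + β)) ∧
        β ^ n * Real.Gamma β * n.factorial * Real.Gamma (β * n + β + ν) /
            (Real.Gamma (β + ν) * Real.Gamma (β * n + β)) = genFact (1 - β) β ν n :=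
  subWeight_solves_stieltjes_general β ν hβ0 hν1 hν2
end

section
/- For parameters α ∈ [0,1], β ∈ (0,1], ν > α−1 with α + β > 0, the generalized factorial has the asymptotic growth lim_{n→∞} ln([n]_{α,β,ν}!) / (n ln n) = α + β. -/
open Real Filter Topology Finset

namespace Real

theorem log_Gamma_add_one {x : ℝ} (hx : 0 < x) :
    log (Gamma (x + 1)) = log (Gamma x) + log x := by
  rw [Gamma_add_one hx.ne', log_mul hx.ne' (Gamma_pos_of_pos hx).ne', add_comm]

theorem log_Gamma_add_le {x t : ℝ} (hx : 0 < x) (ht₀ : 0 ≤ t) (ht₁ : t ≤ 1) :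
    log (Gamma (x + t)) ≤ log (Gamma x) + t * log x := by
  have h := convexOn_log_Gamma.2 (Set.mem_Ioi.2 hx) (Set.mem_Ioi.2 (by linarith : 0 < x + 1))
    (sub_nonneg.2 ht₁) ht₀ (by ring)
  simp only [Function.comp_apply, smul_eq_mul, log_Gamma_add_one hx] at h
  rw [show (1 - t) * x + t * (x + 1) = x + t by ring] at h
  linarith

theorem mul_log_le_log_Gamma_add_one_sub {x a : ℝ} (hx : 0 < x) (ha₀ : 0 ≤ a) (ha₁ : a ≤ 1) :
    a * log x ≤ log (Gamma (x + 1)) - log (Gamma (x + 1 - a)) := by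
  have h := log_Gamma_add_le hx (sub_nonneg.2 ha₁) (by linarith)
  rw [← add_sub_assoc] at h
  rw [log_Gamma_add_one hx]
  linarith

theorem log_Gamma_add_one_sub_le_mul_log {x a : ℝ} (hx : 0 < x) (ha₀ : 0 ≤ a) (ha₁ : a ≤ 1) :
    log (Gamma (x + 1)) - log (Gamma (x + 1 - a)) ≤ a * log (x + 1) := by
  have hy : 0 < x + 1 - a := by linarith
  have h := log_Gamma_add_le hy ha₀ ha₁
  rw [sub_add_cancel] at h
  have := mul_le_mul_of_nonneg_left (log_le_log hy (by linarith : x + 1 - a ≤ x + 1)) ha₀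
  linarith

theorem tendsto_log_mul_add_sub_log {b : ℝ} (hb : 0 < b) (q : ℝ) :
    Tendsto (fun x => log (b * x + q) - log x) atTop (𝓝 (log b)) := by
  have h := (tendsto_log_comp_add_sub_log (q / b)).const_add (log b)
  rw [add_zero] at h
  refine h.congr' ?_
  filter_upwards [eventually_gt_atTop (-(q / b))] with x hx
  rw [show b * x + q = b * (x + q / b) by field_simp, log_mul hb.ne' (by linarith)]
  ring

theorem tendsto_log_Gamma_sub_log_Gamma_sub_mul_log {a b : ℝ} (ha₀ : 0 ≤ a) (ha₁ : a ≤ 1)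
    (hb : 0 < b) (p : ℝ) :
    Tendsto (fun x => log (Gamma (b * x + p)) - log (Gamma (b * x + p - a)) - a * log x)
      atTop (𝓝 (a * log b)) := by
  have lower := ((tendsto_log_mul_add_sub_log hb (p - 1)).const_mul a)
  have upper := ((tendsto_log_mul_add_sub_log hb p).const_mul a)
  refine tendsto_of_tendsto_of_tendsto_of_le_of_le' lower upper ?_ ?_ <;>
  · filter_upwards [(tendsto_id.const_mul_atTop hb).eventually_gt_atTop (1 - p)] with x hx
    have hy : 0 < b * x + (p - 1) := by rw [id] at hx; linarith
    have h₁ := mul_log_le_log_Gamma_add_one_sub hy ha₀ ha₁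
    have h₂ := log_Gamma_add_one_sub_le_mul_log hy ha₀ ha₁
    rw [show b * x + (p - 1) + 1 = b * x + p by ring] at h₁ h₂
    linarith

end Real

theorem tendsto_div_natCast_of_tendsto_sub {v : ℕ → ℝ} {ℓ : ℝ}
    (h : Tendsto (fun k => v (k + 1) - v k) atTop (𝓝 ℓ)) :
    Tendsto (fun n => v n / n) atTop (𝓝 ℓ) := by
  have h' := h.cesaro.add (tendsto_const_div_atTop_nhds_zero_nat (v 0))
  rw [add_zero] at h'
  refine h'.congr fun n => ?_
  rw [sum_range_sub (fun k => v k) n]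
  ring

theorem tendsto_natCast_mul_log_add_one_sub_log :
    Tendsto (fun k : ℕ => k * (log (k + 1) - log k)) atTop (𝓝 1) := by
  have hslope := (hasDerivAt_log one_ne_zero).tendsto_slope_zero
  rw [inv_one] at hslope
  have hinv : Tendsto (fun k : ℕ => (k : ℝ)⁻¹) atTop (𝓝[≠] 0) :=
    (tendsto_inv_atTop_nhdsGT_zero.comp tendsto_natCast_atTop_atTop).mono_right
      (nhdsWithin_mono _ fun _ hx => ne_of_gt hx)
  refine (hslope.comp hinv).congr' ?_
  filter_upwards [eventually_gt_atTop 0] with k hk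
  have hk' : (0 : ℝ) < k := by exact_mod_cast hk
  simp only [Function.comp_apply, inv_inv, smul_eq_mul, log_one, sub_zero]
  rw [show 1 + (k : ℝ)⁻¹ = (k + 1) / k by field_simp, log_div (by positivity) hk'.ne']

theorem tendsto_div_mul_log_of_tendsto_sub_mul_log {u : ℕ → ℝ} {L ℓ : ℝ}
    (h : Tendsto (fun k : ℕ => u (k + 1) - u k - L * log (k + 1)) atTop (𝓝 ℓ)) :
    Tendsto (fun n : ℕ => u n / (n * log n)) atTop (𝓝 L) := by
  -- `n log n` has increments `log (n + 1) + 1 + o(1)`, so `v` has convergent increments.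
  set v : ℕ → ℝ := fun n => u n - L * (n * log n)
  have hv : Tendsto (fun k => v (k + 1) - v k) atTop (𝓝 (ℓ - L * 1)) := by
    refine (h.sub (tendsto_natCast_mul_log_add_one_sub_log.const_mul L)).congr fun k => ?_
    simp only [v]
    push_cast
    ring
  have hlog : Tendsto (fun n : ℕ => log n) atTop atTop :=
    tendsto_log_atTop.comp tendsto_natCast_atTop_atTop
  have h' := ((tendsto_div_natCast_of_tendsto_sub hv).div_atTop hlog).const_add L
  rw [add_zero] at h'
  refine h'.congr' ?_
  filter_upwards [eventually_ge_atTop 2] with n hn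
  have hn' : (1 : ℝ) < n := by exact_mod_cast hn
  have : log n ≠ 0 := (log_pos hn').ne'
  simp only [v]
  field_simp
  ring

section GenFact

variable {α β ν : ℝ}

theorem log_genFact (hα : α ≤ 1) (hβ : 0 < β) (hν : α - 1 < ν) (n : ℕ) :
    log (genFact α β ν n) =
      ∑ i ∈ Icc 1 n, (log (Gamma (β * i + 1)) - log (Gamma (β * i + 1 - α)))
        + (log (Gamma (β * n + 1 - α + ν)) - log (Gamma (1 - α + ν))) := by
  have hΓ : ∀ {x : ℝ}, 0 < x → Gamma x ≠ 0 := fun hx => (Gamma_pos_of_pos hx).ne'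
  have hi : ∀ i ∈ Icc 1 n, Gamma (β * i + 1) ≠ 0 ∧ Gamma (β * i + 1 - α) ≠ 0 := by
    intro i hmem
    have : (1 : ℝ) ≤ i := by exact_mod_cast (mem_Icc.1 hmem).1
    exact ⟨hΓ (by nlinarith), hΓ (by nlinarith)⟩
  have hn : 0 < β * n + 1 - α + ν := by have := n.cast_nonneg (α := ℝ); nlinarith
  have hfactor : ∀ i ∈ Icc 1 n, Gamma (β * i + 1) / Gamma (β * i + 1 - α) ≠ 0 :=
    fun i hi' => div_ne_zero (hi i hi').1 (hi i hi').2
  rw [genFact, log_mul (prod_ne_zero_iff.2 hfactor) (div_ne_zero (hΓ hn) (hΓ (by linarith))),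
    log_prod hfactor, log_div (hΓ hn) (hΓ (by linarith))]
  congr 1
  exact sum_congr rfl fun i hi' => log_div (hi i hi').1 (hi i hi').2

theorem log_genFact_succ (hα : α ≤ 1) (hβ : 0 < β) (hν : α - 1 < ν) (n : ℕ) :
    log (genFact α β ν (n + 1)) = log (genFact α β ν n)
      + (log (Gamma (β * (n + 1) + 1)) - log (Gamma (β * (n + 1) + 1 - α)))
      + (log (Gamma (β * (n + 1) + 1 - α + ν)) - log (Gamma (β * n + 1 - α + ν))) := by
  rw [log_genFact hα hβ hν, log_genFact hα hβ hν, sum_Icc_succ_top (by omega)]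
  push_cast
  ring

end GenFact

theorem genFact_asymptotic_growth_general (α β ν : ℝ) (hα0 : 0 ≤ α) (hα1 : α ≤ 1)
    (hβ0 : 0 < β) (hβ1 : β ≤ 1) (hν : ν > α - 1) :
    Filter.Tendsto (fun n : ℕ => Real.log (genFact α β ν n) / (n * Real.log n))
      Filter.atTop (nhds (α + β)) := by
  have hk : Tendsto (fun k : ℕ => (k : ℝ) + 1) atTop atTop :=
    tendsto_atTop_add_const_right _ 1 tendsto_natCast_atTop_atTop
  have hA := (tendsto_log_Gamma_sub_log_Gamma_sub_mul_log hα0 hα1 hβ0 1).comp hk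
  have hB := (tendsto_log_Gamma_sub_log_Gamma_sub_mul_log hβ0.le hβ1 hβ0 (1 - α + ν)).comp hk
  refine tendsto_div_mul_log_of_tendsto_sub_mul_log ((hA.add hB).congr fun k => ?_)
  rw [Function.comp_apply, Function.comp_apply, log_genFact_succ hα1 hβ0 hν,
    show β * (k + 1) + (1 - α + ν) - β = β * k + 1 - α + ν by ring,
    show β * (k + 1) + (1 - α + ν) = β * (k + 1) + 1 - α + ν by ring]
  ring

theorem genFact_asymptotic_growth (α β ν : ℝ) (hα0 : 0 ≤ α) (hα1 : α ≤ 1)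
    (hβ0 : 0 < β) (hβ1 : β ≤ 1) (hν : ν > α - 1) (hαβ : 0 < α + β) :
    Filter.Tendsto (fun n : ℕ => Real.log (genFact α β ν n) / (n * Real.log n))
      Filter.atTop (nhds (α + β)) :=
  genFact_asymptotic_growth_general α β ν hα0 hα1 hβ0 hβ1 hν
end
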